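/- For all (r,m), (s,q) ∈ H = ℤ[1/2] ⋊ ℤ, the elements b⁻¹·(r,m) and b⁻¹·(s,q) of G(1,2) are conjugate in G(1,2) if and only if 2^{q−m}·r = s + 2^q·(q−m) holds in ℤ[1/2]. -/

import Mathlib

/-- The ring of dyadic rationals `ℤ[1/2]`, as a subring of `ℚ`. -/
def Dyadic2 : Subring ℚ := Subring.closure {(2:ℚ)⁻¹}

lemma Dyadic2.two_mem : (2:ℚ) ∈ Dyadic2 := by
  have := add_mem (Subring.one_mem Dyadic2) (Subring.one_mem Dyadic2)
  convert this using 1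
  norm_num

lemma Dyadic2.half_mem : (2:ℚ)⁻¹ ∈ Dyadic2 := Subring.subset_closure rfl

/-- `2` as a unit of `ℤ[1/2]`. -/
def Dyadic2.two : Dyadic2ˣ where
  val := ⟨2, Dyadic2.two_mem⟩
  inv := ⟨(2:ℚ)⁻¹, Dyadic2.half_mem⟩
  val_inv := by ext; norm_num
  inv_val := by ext; norm_num

/-- The powers `2^m` for `m : ℤ`, as elements of `ℤ[1/2]`. -/
def pow2 (m : ℤ) : Dyadic2 := ((Dyadic2.two ^ m : Dyadic2ˣ) : Dyadic2)

lemma pow2_add (m q : ℤ) : pow2 (m + q) = pow2 m * pow2 q := by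
  simp [pow2, zpow_add]

lemma pow2_zero : pow2 0 = 1 := by simp [pow2]

/-- The group `H = ℤ[1/2] ⋊ ℤ`, where `ℤ` acts by powers of `2`;
multiplication is `(r,m)·(s,q) = (r + 2^m·s, m+q)`. -/
@[ext] structure Hgrp where
  r : Dyadic2
  m : ℤ

instance : Mul Hgrp := ⟨fun x y => ⟨x.r + pow2 x.m * y.r, x.m + y.m⟩⟩
instance : One Hgrp := ⟨⟨0, 0⟩⟩
instance : Inv Hgrp := ⟨fun x => ⟨-(pow2 (-x.m) * x.r), -x.m⟩⟩

lemma Hgrp.mul_def (x y : Hgrp) : x * y = ⟨x.r + pow2 x.m * y.r, x.m + y.m⟩ := rfl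
lemma Hgrp.one_def : (1 : Hgrp) = ⟨0, 0⟩ := rfl
lemma Hgrp.inv_def (x : Hgrp) : x⁻¹ = ⟨-(pow2 (-x.m) * x.r), -x.m⟩ := rfl

instance : Group Hgrp where
  mul_assoc a b c := by
    simp only [Hgrp.mul_def, Hgrp.mk.injEq, pow2_add]
    constructor <;> ring
  one_mul a := by
    obtain ⟨r, m⟩ := a
    simp only [Hgrp.one_def, Hgrp.mul_def, Hgrp.mk.injEq, pow2_zero]
    constructor <;> ring
  mul_one a := by
    obtain ⟨r, m⟩ := a
    simp only [Hgrp.one_def, Hgrp.mul_def, Hgrp.mk.injEq, pow2_zero]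
    constructor <;> ring
  inv_mul_cancel a := by
    simp only [Hgrp.inv_def, Hgrp.mul_def, Hgrp.one_def, Hgrp.mk.injEq]
    constructor <;> ring

/-- Conjugacy in `H`. -/
def conjH (x y : Hgrp) : Prop := ∃ z : Hgrp, z * x * z⁻¹ = y

/-- The element `a = (1,0)` of `H`. -/
def aH : Hgrp := ⟨1, 0⟩
/-- The element `t = (0,1)` of `H`. -/
def tH : Hgrp := ⟨0, 1⟩
lemma aH_zpow (n : ℤ) : aH ^ n = Hgrp.mk (n : Dyadic2) 0 := by
  induction n using Int.induction_on with
  | zero => simp [Hgrp.one_def]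
  | succ k ih =>
      rw [zpow_add_one, ih]
      simp only [aH, Hgrp.mul_def, Hgrp.mk.injEq, pow2_zero]
      push_cast
      constructor <;> first | ring | trivial | simp
  | pred k ih =>
      rw [zpow_sub_one, ih]
      simp only [aH, Hgrp.inv_def, Hgrp.mul_def, Hgrp.mk.injEq, pow2_zero, neg_zero]
      push_cast
      constructor <;> first | ring | trivial | simp

lemma tH_zpow (n : ℤ) : tH ^ n = Hgrp.mk 0 n := by
  induction n using Int.induction_on with
  | zero => simp [Hgrp.one_def]
  | succ k ih =>
      rw [zpow_add_one, ih]
      simp [tH, Hgrp.mul_def]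
  | pred k ih =>
      rw [zpow_sub_one, ih]
      simp only [tH, Hgrp.inv_def, Hgrp.mul_def, Hgrp.mk.injEq]
      constructor <;> ring

lemma aH_zpow_injective : Function.Injective fun n : ℤ => aH ^ n := by
  intro x y h
  simp only [aH_zpow, Hgrp.mk.injEq] at h
  have : ((x : Dyadic2) : ℚ) = ((y : Dyadic2) : ℚ) := by rw [h.1]
  simpa using this

lemma tH_zpow_injective : Function.Injective fun n : ℤ => tH ^ n := by
  intro x y h
  simp only [tH_zpow, Hgrp.mk.injEq] at h
  exact h.2

/-- The homomorphism `ℤ →* G` given by powers of `g`. -/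
def zintHom {G : Type*} [Group G] (g : G) : Multiplicative ℤ →* G where
  toFun n := g ^ (Multiplicative.toAdd n)
  map_one' := by simp
  map_mul' x y := by simp [zpow_add]

/-- For `g` with `n ↦ g ^ n` injective, `⟨g⟩ ≅ ℤ`. -/
noncomputable def zpowMulEquiv {G : Type*} [Group G] (g : G)
    (hg : Function.Injective fun n : ℤ => g ^ n) :
    Multiplicative ℤ ≃* Subgroup.zpowers g := by
  refine MulEquiv.ofBijective
    ((zintHom g).codRestrict (Subgroup.zpowers g).toSubmonoid
      (fun n => Subgroup.mem_zpowers_iff.mpr ⟨Multiplicative.toAdd n, rfl⟩)) ⟨?_, ?_⟩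
  · intro x y h
    have : g ^ (Multiplicative.toAdd x) = g ^ (Multiplicative.toAdd y) :=
      congrArg Subtype.val h
    exact hg this
  · rintro ⟨x, hx⟩
    obtain ⟨n, hn⟩ := Subgroup.mem_zpowers_iff.mp hx
    exact ⟨Multiplicative.ofAdd n, Subtype.ext hn⟩

/-- The associated isomorphism `⟨a⟩ ≅ ⟨t⟩`, `a ↦ t`, of the HNN extension defining
the Baumslag group. -/
noncomputable def φBS : Subgroup.zpowers aH ≃* Subgroup.zpowers tH :=
  (zpowMulEquiv aH aH_zpow_injective).symm.trans (zpowMulEquiv tH tH_zpow_injective)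

/-- The Baumslag group `G(1,2)`, as HNN extension of `H = BS(1,2)` with stable letter `b`,
associated subgroups `⟨a⟩` and `⟨t⟩`, and associated isomorphism `a ↦ t`. -/
noncomputable abbrev BG := HNNExtension Hgrp (Subgroup.zpowers aH) (Subgroup.zpowers tH) φBS

/-- The embedding of `H` into the Baumslag group. -/
noncomputable def ι : Hgrp →* BG := HNNExtension.of

/-- The stable letter `b` of the Baumslag group. -/
noncomputable def bBG : BG := HNNExtension.t

/-- Conjugacy in the Baumslag group `G(1,2)`. -/
def conjBG (x y : BG) : Prop := ∃ z : BG, z * x * z⁻¹ = y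

/-!
In an HNN extension of a group `G` with stable letter `t` and `t a t⁻¹ = φ a` for `a ∈ A`,
the elements `t⁻¹ u` and `t⁻¹ v` (`u v ∈ G`) are conjugate iff `v = φ(a) u a⁻¹` for some
`a ∈ A`. Sufficiency is the relation `a t⁻¹ = t⁻¹ φ(a)`. Conversely, induct on the length of a
reduced word `z` conjugating `t⁻¹ u` to `t⁻¹ v`. A pinch between `z` and `t⁻¹ u`, or between
`t⁻¹ v` and `z`, cancels at the price of replacing `u` or `v` by such a twisted conjugate. If
there is none, `z t⁻¹ u` and `t⁻¹ v z` are both reduced, and the normal form theorem forces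
`z = a` or `z = a t⁻¹ z'` with `a ∈ A`; in the first case we are done, in the second
`(t⁻¹ v)⁻¹ z` is a shorter conjugator.

In `G(1,2)` we have `φ(a^k) = t^k` and `t^k (r,m) a^{-k} = (2^k r - 2^{k+m} k, k + m)`, so the
twisted conjugates of `(r,m)` are the `(s,q)` with `2^{q-m} r = s + 2^q (q - m)`, for `k = q - m`.
-/

theorem conj_mul_eq_conj_conj {M : Type*} [Group M] (c z x : M) :
    c * z * x * (c * z)⁻¹ = c * (z * x * z⁻¹) * c⁻¹ := by
  group

namespace HNNExtension

open NormalWord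

variable {G : Type*} [Group G] {A B : Subgroup G} (φ : A ≃* B)

def TwistedConj (u v : G) : Prop := ∃ a : A, v = φ a * u * (a : G)⁻¹

variable {φ}

theorem TwistedConj.trans {u v w : G} (h₁ : TwistedConj φ u v) (h₂ : TwistedConj φ v w) :
    TwistedConj φ u w := by
  obtain ⟨a, rfl⟩ := h₁
  obtain ⟨b, rfl⟩ := h₂
  exact ⟨b * a, by simp [mul_assoc]⟩

theorem of_conj_inv_t_mul_of (a : A) (u : G) :
    of (a : G) * (t⁻¹ * of u) * (of (a : G))⁻¹ =
      (t⁻¹ * of ((φ a : G) * u * (a : G)⁻¹) : HNNExtension G A B φ) := by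
  rw [← mul_assoc, of_mul_inv_t]
  simp [mul_assoc]

variable (A B) in
abbrev IsReducedPair (p q : ℤˣ × G) : Prop := p.2 ∈ toSubgroup A B p.1 → p.1 = q.1

theorem exists_eq_append_of_not_isChain_append {L : List (ℤˣ × G)} {u : G}
    (hL : L.IsChain (IsReducedPair A B)) (h : ¬(L ++ [(-1, u)]).IsChain (IsReducedPair A B)) :
    ∃ L' g, L = L' ++ [(1, g)] ∧ g ∈ A := by
  rcases L.eq_nil_or_concat' with rfl | ⟨L', ⟨e, g⟩, rfl⟩
  · exact absurd (List.isChain_singleton _) h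
  rw [List.isChain_append] at h
  simp [hL] at h
  obtain rfl := (Int.units_eq_one_or e).resolve_right h.2
  exact ⟨L', g, rfl, h.1⟩

theorem exists_eq_cons_of_not_isChain_cons {L : List (ℤˣ × G)} {x : G}
    (hL : L.IsChain (IsReducedPair A B)) (h : ¬((-1, x) :: L).IsChain (IsReducedPair A B)) :
    ∃ g L', L = (1, g) :: L' ∧ x ∈ B := by
  rcases L with _ | ⟨⟨e, g⟩, L'⟩
  · exact absurd (List.isChain_singleton _) h
  simp [List.isChain_cons, hL] at h
  obtain rfl := (Int.units_eq_one_or e).resolve_right (Ne.symm h.2)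
  exact ⟨g, L', rfl, h.1⟩

namespace NormalWord.ReducedWord

theorem prod_mk_append_singleton (g : G) (L : List (ℤˣ × G)) (p : ℤˣ × G)
    (h : (L ++ [p]).IsChain (IsReducedPair A B)) :
    (⟨g, L ++ [p], h⟩ : ReducedWord G A B).prod φ =
      (⟨g, L, (List.isChain_append.mp h).1⟩ : ReducedWord G A B).prod φ * t ^ (p.1 : ℤ) *
        of p.2 := by
  simp [ReducedWord.prod, mul_assoc]

theorem prod_mk_cons (g : G) (p : ℤˣ × G) (L : List (ℤˣ × G))
    (h : (p :: L).IsChain (IsReducedPair A B)) :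
    (⟨g, p :: L, h⟩ : ReducedWord G A B).prod φ =
      of g * t ^ (p.1 : ℤ) * (⟨p.2, L, (List.isChain_cons.mp h).2⟩ : ReducedWord G A B).prod φ := by
  simp [ReducedWord.prod, mul_assoc]

theorem exists_prod_eq_prod_mul_of (w : ReducedWord G A B) (g : G) :
    ∃ w' : ReducedWord G A B, w'.prod φ = w.prod φ * of g ∧
      w'.toList.length = w.toList.length := by
  obtain ⟨g₀, L, ch⟩ := w
  rcases L.eq_nil_or_concat' with rfl | ⟨L, p, rfl⟩
  · exact ⟨⟨g₀ * g, [], List.isChain_nil⟩, by simp [ReducedWord.prod], rfl⟩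
  obtain ⟨hL, -, hlast⟩ := List.isChain_append.mp ch
  have ch' : (L ++ [(p.1, p.2 * g)]).IsChain (IsReducedPair A B) :=
    List.isChain_append.mpr ⟨hL, List.isChain_singleton _,
      fun x hx _ hy => by cases hy; exact hlast x hx p rfl⟩
  exact ⟨⟨g₀, _, ch'⟩, by simp [prod_mk_append_singleton, mul_assoc], by simp⟩

end NormalWord.ReducedWord

open NormalWord.ReducedWord

/-- With no pinch at either end, `z t⁻¹ u` and `t⁻¹ v z` are reduced words for the same element,
so their heads and first letters are related by the normal form theorem. -/
theorem head_mem_of_conj_of_isChain {w : ReducedWord G A B} {u v : G}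
    (h₁ : (w.toList ++ [(-1, u)]).IsChain (IsReducedPair A B))
    (h₂ : ((-1, v * w.head) :: w.toList).IsChain (IsReducedPair A B))
    (h : w.prod φ * (t⁻¹ * of u) * (w.prod φ)⁻¹ = t⁻¹ * of v) :
    w.head ∈ A ∧ ∀ p ∈ w.toList.head?, p.1 = -1 := by
  let W₁ : ReducedWord G A B := ⟨w.head, w.toList ++ [(-1, u)], h₁⟩
  let W₂ : ReducedWord G A B := ⟨1, (-1, v * w.head) :: w.toList, h₂⟩
  have hW : W₁.prod φ = W₂.prod φ := by
    rw [mul_inv_eq_iff_eq_mul] at h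
    simpa [W₁, W₂, ReducedWord.prod, mul_assoc] using h
  obtain ⟨hfst, hhead⟩ := ReducedWord.map_fst_eq_and_of_prod_eq φ hW
  have hfirst : (W₁.toList.map Prod.fst).head? = some (-1) := by rw [hfst]; rfl
  rw [List.head?_map] at hfirst
  refine ⟨by simpa [W₂] using hhead _ hfirst, fun p hp => ?_⟩
  rw [List.head?_append, hp] at hfirst
  simpa using hfirst

theorem exists_conj_of_right_pinch {w : ReducedWord G A B} {L : List (ℤˣ × G)} {g u v : G}
    (hw : w.toList = L ++ [(1, g)]) (hg : g ∈ A)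
    (h : w.prod φ * (t⁻¹ * of u) * (w.prod φ)⁻¹ = t⁻¹ * of v) :
    ∃ w' : ReducedWord G A B, w'.toList.length = L.length ∧
      w'.prod φ * (t⁻¹ * of ((φ ⟨g, hg⟩ : G) * u * g⁻¹)) * (w'.prod φ)⁻¹ = t⁻¹ * of v := by
  obtain ⟨g₀, _, ch⟩ := w
  subst hw
  obtain ⟨w', hw', hlen⟩ := exists_prod_eq_prod_mul_of (φ := φ)
    ⟨g₀, L, (List.isChain_append.mp ch).1⟩ ((φ ⟨g, hg⟩ : G) * u * g⁻¹)
  refine ⟨w', hlen, ?_⟩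
  rw [← h, hw', prod_mk_append_singleton]
  simp only [Units.val_one, zpow_one, map_mul, map_inv, equiv_eq_conj]
  group

theorem exists_conj_of_left_pinch {w : ReducedWord G A B} {L : List (ℤˣ × G)} {g u v : G}
    (hw : w.toList = (1, g) :: L) (hv : v * w.head ∈ B)
    (h : w.prod φ * (t⁻¹ * of u) * (w.prod φ)⁻¹ = t⁻¹ * of v) :
    ∃ w' : ReducedWord G A B, w'.toList.length = L.length ∧
      w'.prod φ * (t⁻¹ * of u) * (w'.prod φ)⁻¹ =
        t⁻¹ * of (w.head⁻¹ * φ.symm ⟨v * w.head, hv⟩) := by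
  obtain ⟨g₀, _, ch⟩ := w
  subst hw
  refine ⟨⟨g, L, (List.isChain_cons.mp ch).2⟩, rfl, ?_⟩
  rw [prod_mk_cons, Units.val_one, zpow_one, conj_mul_eq_conj_conj, mul_inv_eq_iff_eq_mul,
    ← eq_inv_mul_iff_mul_eq] at h
  rw [h]
  simp only [map_mul, map_inv, equiv_symm_eq_conj]
  group

theorem exists_conj_of_head_mem {w : ReducedWord G A B} {L : List (ℤˣ × G)} {g u v : G}
    (hw : w.toList = (-1, g) :: L) (hg : w.head ∈ A)
    (h : w.prod φ * (t⁻¹ * of u) * (w.prod φ)⁻¹ = t⁻¹ * of v) :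
    ∃ w' : ReducedWord G A B, w'.toList.length = L.length ∧
      w'.prod φ * (t⁻¹ * of u) * (w'.prod φ)⁻¹ = t⁻¹ * of v := by
  obtain ⟨g₀, _, ch⟩ := w
  subst hw
  refine ⟨⟨v⁻¹ * φ ⟨g₀, hg⟩ * g, L, (List.isChain_cons.mp ch).2⟩, rfl, ?_⟩
  have hz : (⟨v⁻¹ * φ ⟨g₀, hg⟩ * g, L, (List.isChain_cons.mp ch).2⟩ :
      ReducedWord G A B).prod φ =
        (t⁻¹ * of v)⁻¹ * (⟨g₀, (-1, g) :: L, ch⟩ : ReducedWord G A B).prod φ := by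
    simp only [ReducedWord.prod, List.map_cons, List.prod_cons, map_mul, map_inv, equiv_eq_conj,
      Units.val_neg, Units.val_one]
    group
  rw [hz, conj_mul_eq_conj_conj, h]
  group

theorem twistedConj_of_conj (w : ReducedWord G A B) {u v : G}
    (h : w.prod φ * (t⁻¹ * of u) * (w.prod φ)⁻¹ = t⁻¹ * of v) : TwistedConj φ u v := by
  induction hn : w.toList.length using Nat.strong_induction_on generalizing w u v with
  | _ n ih =>
  by_cases h₁ : (w.toList ++ [(-1, u)]).IsChain (IsReducedPair A B)
  swap
  · obtain ⟨L, g, hw, hg⟩ := exists_eq_append_of_not_isChain_append w.chain h₁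
    obtain ⟨w', hlen, h'⟩ := exists_conj_of_right_pinch hw hg h
    exact TwistedConj.trans ⟨⟨g, hg⟩, rfl⟩ (ih _ (by simp [← hn, hw, hlen]) w' h' rfl)
  by_cases h₂ : ((-1, v * w.head) :: w.toList).IsChain (IsReducedPair A B)
  swap
  · obtain ⟨g, L, hw, hv⟩ := exists_eq_cons_of_not_isChain_cons w.chain h₂
    obtain ⟨w', hlen, h'⟩ := exists_conj_of_left_pinch hw hv h
    exact (ih _ (by simp [← hn, hw, hlen]) w' h' rfl).trans ⟨φ.symm ⟨_, hv⟩, by simp⟩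
  obtain ⟨hg₀, hsign⟩ := head_mem_of_conj_of_isChain h₁ h₂ h
  rcases hw : w.toList with _ | ⟨⟨e, g⟩, L⟩
  · have hv : (t⁻¹ * of v : HNNExtension G A B φ) =
        t⁻¹ * of ((φ ⟨w.head, hg₀⟩ : G) * u * w.head⁻¹) := by
      rw [← of_conj_inv_t_mul_of, ← h]
      simp [ReducedWord.prod, hw]
    exact ⟨⟨w.head, hg₀⟩, of_injective φ (mul_left_cancel hv)⟩
  · obtain rfl : e = -1 := hsign (e, g) (by simp [hw])
    obtain ⟨w', hlen, h'⟩ := exists_conj_of_head_mem hw hg₀ h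
    exact ih _ (by simp [← hn, hw, hlen]) w' h' rfl

/-- Collins' lemma for the cyclically reduced elements `t⁻¹ u` of length one. -/
theorem isConj_inv_t_mul_of_iff {u v : G} :
    IsConj (t⁻¹ * of u : HNNExtension G A B φ) (t⁻¹ * of v) ↔ TwistedConj φ u v := by
  rw [isConj_iff]
  constructor
  · rintro ⟨z, hz⟩
    obtain ⟨d⟩ := TransversalPair.nonempty G A B
    exact twistedConj_of_conj (z • NormalWord.empty : NormalWord d).toReducedWord
      (by simpa using hz)
  · rintro ⟨a, rfl⟩
    exact ⟨of (a : G), of_conj_inv_t_mul_of a u⟩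

end HNNExtension

lemma φBS_apply_zpow (k : ℤ) :
    (φBS ⟨aH ^ k, Subgroup.zpow_mem_zpowers aH k⟩ : Hgrp) = tH ^ k := by
  have : (zpowMulEquiv aH aH_zpow_injective).symm ⟨aH ^ k, Subgroup.zpow_mem_zpowers aH k⟩ =
      Multiplicative.ofAdd k := by
    rw [MulEquiv.symm_apply_eq]
    rfl
  simp only [φBS, MulEquiv.trans_apply, this]
  rfl

lemma tH_zpow_mul_mul_aH_zpow_inv (k : ℤ) (r : Dyadic2) (m : ℤ) :
    tH ^ k * ⟨r, m⟩ * (aH ^ k)⁻¹ = ⟨pow2 k * r - pow2 (k + m) * k, k + m⟩ := by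
  rw [tH_zpow, ← zpow_neg, aH_zpow]
  ext
  · simp [Hgrp.mul_def]
    ring
  · simp [Hgrp.mul_def]

lemma twistedConj_φBS_iff (r s : Dyadic2) (m q : ℤ) :
    HNNExtension.TwistedConj φBS ⟨r, m⟩ ⟨s, q⟩ ↔
      pow2 (q - m) * r = s + pow2 q * ((q - m : ℤ) : Dyadic2) := by
  constructor
  · rintro ⟨⟨_, hk⟩, h⟩
    obtain ⟨k, rfl⟩ := Subgroup.mem_zpowers_iff.mp hk
    rw [φBS_apply_zpow, tH_zpow_mul_mul_aH_zpow_inv] at h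
    obtain ⟨rfl, rfl⟩ := Hgrp.mk.inj h
    simp
  · intro h
    refine ⟨⟨aH ^ (q - m), Subgroup.zpow_mem_zpowers aH _⟩, ?_⟩
    rw [φBS_apply_zpow, tH_zpow_mul_mul_aH_zpow_inv, sub_add_cancel, h]
    simp

theorem stmt7 (r s : Dyadic2) (m q : ℤ) :
    conjBG (bBG⁻¹ * ι ⟨r, m⟩) (bBG⁻¹ * ι ⟨s, q⟩) ↔
      pow2 (q - m) * r = s + pow2 q * ((q - m : ℤ) : Dyadic2) := by
  rw [← twistedConj_φBS_iff, ← HNNExtension.isConj_inv_t_mul_of_iff]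
  exact isConj_iff.symm
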